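/- Let f : ℝ^{d_x} → ℝ^{d_z} be linear with operator norm at most 1, let S ⊆ ℝ^{d_x} be a linear subspace of dimension d_S, and let X ∈ ℝ^{d_x×n} satisfy Col(X) = S. If σ_p(f(X)) = σ_p(X) for all 1 ≤ p ≤ d_S, then f restricted to S is an ℓ²-isometry, i.e., ‖f(u)‖₂ = ‖u‖₂ for all u ∈ S. -/

import Mathlib

open Matrix

noncomputable def codingRate {d : ℕ} {m : Type*} [Fintype m] (ε : ℝ)
    (Z : Matrix (Fin d) m ℝ) : ℝ :=
  (1 / 2) * Real.log ((1 + ((d : ℝ) / (Fintype.card m * ε ^ 2)) • (Z * Zᵀ)).det)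

noncomputable def deltaR {d n : ℕ} (ε : ℝ) (Z₁ Z₂ : Matrix (Fin d) (Fin n) ℝ) : ℝ :=
  codingRate ε (fromCols Z₁ Z₂) - (1 / 2) * codingRate ε Z₁ - (1 / 2) * codingRate ε Z₂

theorem Matrix.isHermitian_transpose_mul_self {m n α : Type*} [Fintype m] [CommSemiring α]
    [StarRing α] [TrivialStar α] (A : Matrix m n α) : (Aᵀ * A).IsHermitian := by
  simpa [conjTranspose_eq_transpose_of_trivial] using isHermitian_conjTranspose_mul_self A

noncomputable def sval {d n : ℕ} (A : Matrix (Fin d) (Fin n) ℝ) : Fin n → ℝ :=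
  fun p => Real.sqrt ((Matrix.isHermitian_transpose_mul_self A).eigenvalues
    (Tuple.sort ((Matrix.isHermitian_transpose_mul_self A).eigenvalues) p.rev))

noncomputable def colSpan {d n : ℕ} (A : Matrix (Fin d) (Fin n) ℝ) :
    Submodule ℝ (Fin d → ℝ) :=
  Submodule.span ℝ (Set.range Aᵀ)

/-
The squared singular values of a matrix sum to its squared Frobenius norm, and those of index
at least the rank vanish. Since `rank (F X) ≤ rank X = d_S`, equality of the top `d_S` singular
values therefore gives `‖F X‖_F = ‖X‖_F`. As `F` is a contraction, this forces every column of
`X` to keep its length under `F`. Finally, for a contraction the vectors whose length is kept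
form the kernel of the positive semidefinite matrix `1 - Fᵀ F`, a subspace; it contains the
columns of `X`, hence all of `S`.
-/

lemma Tuple.apply_sort_rev_eq_zero {n : ℕ} {L : Fin n → ℝ} (hL : ∀ i, 0 ≤ L i) {p : Fin n}
    (hp : Fintype.card {i // L i ≠ 0} ≤ p) : L (Tuple.sort L p.rev) = 0 := by
  classical
  by_contra hne
  have hpos : 0 < L (Tuple.sort L p.rev) := (hL _).lt_of_ne' hne
  -- sorting is ascending, so every entry from position `p.rev` on is nonzero
  have hcard : (Finset.Ici p.rev).card ≤ Fintype.card {i // L i ≠ 0} := by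
    rw [Fintype.card_subtype]
    refine Finset.card_le_card_of_injOn (Tuple.sort L) (fun j hj => ?_)
      (Tuple.sort L).injective.injOn
    simp only [Finset.coe_Ici, Set.mem_Ici, Finset.coe_filter, Finset.mem_univ, true_and,
      Set.mem_ofPred_eq] at hj ⊢
    exact (hpos.trans_le (Tuple.monotone_sort L hj)).ne'
  rw [Fin.card_Ici, Fin.val_rev] at hcard
  omega

namespace Matrix

section Contraction

variable {m n : Type*} [Fintype m] [Fintype n] [DecidableEq n] {F : Matrix m n ℝ}

lemma dotProduct_one_sub_transpose_mul_self_mulVec (F : Matrix m n ℝ) (x : n → ℝ) :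
    x ⬝ᵥ ((1 - Fᵀ * F) *ᵥ x) = ∑ i, x i ^ 2 - ∑ i, (F *ᵥ x) i ^ 2 := by
  rw [sub_mulVec, one_mulVec, dotProduct_sub, ← mulVec_mulVec, dotProduct_mulVec,
    vecMul_transpose]
  simp [dotProduct, sq]

lemma posSemidef_one_sub_transpose_mul_self
    (hF : ∀ x : n → ℝ, ∑ i, (F *ᵥ x) i ^ 2 ≤ ∑ i, x i ^ 2) : (1 - Fᵀ * F).PosSemidef := by
  refine posSemidef_iff_dotProduct_mulVec.mpr
    ⟨isHermitian_one.sub (isHermitian_transpose_mul_self F), fun x => ?_⟩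
  rw [star_trivial, dotProduct_one_sub_transpose_mul_self_mulVec]
  exact sub_nonneg.mpr (hF x)

lemma sum_sq_mulVec_eq_iff_mulVec_eq_zero
    (hF : ∀ x : n → ℝ, ∑ i, (F *ᵥ x) i ^ 2 ≤ ∑ i, x i ^ 2) (x : n → ℝ) :
    ∑ i, (F *ᵥ x) i ^ 2 = ∑ i, x i ^ 2 ↔ (1 - Fᵀ * F) *ᵥ x = 0 := by
  rw [← (posSemidef_one_sub_transpose_mul_self hF).dotProduct_mulVec_zero_iff, star_trivial,
    dotProduct_one_sub_transpose_mul_self_mulVec, sub_eq_zero, eq_comm]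

lemma sum_sq_mulVec_eq_of_mem_span
    (hF : ∀ x : n → ℝ, ∑ i, (F *ᵥ x) i ^ 2 ≤ ∑ i, x i ^ 2) {s : Set (n → ℝ)}
    (hs : ∀ x ∈ s, ∑ i, (F *ᵥ x) i ^ 2 = ∑ i, x i ^ 2) {u : n → ℝ}
    (hu : u ∈ Submodule.span ℝ s) : ∑ i, (F *ᵥ u) i ^ 2 = ∑ i, u i ^ 2 := by
  have hker : Submodule.span ℝ s ≤ LinearMap.ker (1 - Fᵀ * F).mulVecLin :=
    Submodule.span_le.mpr fun x hx =>
      (sum_sq_mulVec_eq_iff_mulVec_eq_zero hF x).mp (hs x hx)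
  exact (sum_sq_mulVec_eq_iff_mulVec_eq_zero hF u).mpr (hker hu)

end Contraction

lemma eigenvalues_transpose_mul_self_nonneg {m n : Type*} [Fintype m] [Fintype n] [DecidableEq n]
    (A : Matrix m n ℝ) (i : n) : 0 ≤ (isHermitian_transpose_mul_self A).eigenvalues i := by
  simpa only [conjTranspose_eq_transpose_of_trivial] using
    (posSemidef_conjTranspose_mul_self A).eigenvalues_nonneg i

section SingularValues

variable {d n : ℕ}

lemma sval_sq (A : Matrix (Fin d) (Fin n) ℝ) (p : Fin n) :
    sval A p ^ 2 = (isHermitian_transpose_mul_self A).eigenvalues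
      (Tuple.sort (isHermitian_transpose_mul_self A).eigenvalues p.rev) :=
  Real.sq_sqrt (eigenvalues_transpose_mul_self_nonneg A _)

lemma sum_sval_sq (A : Matrix (Fin d) (Fin n) ℝ) :
    ∑ p, sval A p ^ 2 = ∑ j, ∑ i, A i j ^ 2 := by
  have hA := isHermitian_transpose_mul_self A
  calc ∑ p, sval A p ^ 2
      = ∑ p : Fin n, hA.eigenvalues (Tuple.sort hA.eigenvalues p.rev) := by simp only [sval_sq]
    _ = ∑ i, hA.eigenvalues i :=
        Equiv.sum_comp (Fin.revPerm.trans (Tuple.sort hA.eigenvalues)) hA.eigenvalues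
    _ = (Aᵀ * A).trace := by simpa using hA.trace_eq_sum_eigenvalues.symm
    _ = ∑ j, ∑ i, A i j ^ 2 := by
        simp only [trace, diag_apply, mul_apply, transpose_apply, sq]

lemma sval_eq_zero_of_rank_le (A : Matrix (Fin d) (Fin n) ℝ) {p : Fin n} (hp : A.rank ≤ p) :
    sval A p = 0 := by
  have hA := isHermitian_transpose_mul_self A
  have hcard : Fintype.card {i // hA.eigenvalues i ≠ 0} ≤ p := by
    rwa [← hA.rank_eq_card_non_zero_eigs, rank_transpose_mul_self]
  rw [sval, Tuple.apply_sort_rev_eq_zero (eigenvalues_transpose_mul_self_nonneg A) hcard,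
    Real.sqrt_zero]

lemma sval_eq_of_rank_le {d' r : ℕ} {A : Matrix (Fin d) (Fin n) ℝ}
    {B : Matrix (Fin d') (Fin n) ℝ} (hA : A.rank ≤ r) (hB : B.rank ≤ r)
    (h : ∀ p : Fin n, (p : ℕ) < r → sval A p = sval B p) : sval A = sval B := by
  funext p
  by_cases hp : (p : ℕ) < r
  · exact h p hp
  · rw [sval_eq_zero_of_rank_le A (hA.trans (not_lt.mp hp)),
      sval_eq_zero_of_rank_le B (hB.trans (not_lt.mp hp))]

lemma sum_sq_mulVec_transpose_apply_eq_of_sval_mul_eq {d' : ℕ} {F : Matrix (Fin d') (Fin d) ℝ}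
    (hF : ∀ x : Fin d → ℝ, ∑ i, (F *ᵥ x) i ^ 2 ≤ ∑ i, x i ^ 2) {X : Matrix (Fin d) (Fin n) ℝ}
    (hsv : sval (F * X) = sval X) (j : Fin n) :
    ∑ i, (F *ᵥ Xᵀ j) i ^ 2 = ∑ i, Xᵀ j i ^ 2 := by
  have hfrob : ∑ j, ∑ i, (F * X) i j ^ 2 = ∑ j, ∑ i, X i j ^ 2 := by
    rw [← sum_sval_sq, ← sum_sval_sq, hsv]
  exact (Finset.sum_eq_sum_iff_of_le fun j _ => hF (Xᵀ j)).mp hfrob j (Finset.mem_univ j)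

end SingularValues

end Matrix

/-- If F has operator norm ≤ 1, Col(X) = S with dim S = dS, and the top dS singular
values of F X equal those of X, then x ↦ F x is an ℓ²-isometry on S. -/
theorem stmt4 {dx dz n dS : ℕ} (F : Matrix (Fin dz) (Fin dx) ℝ)
    (hF : ∀ x : Fin dx → ℝ, ∑ i, (F.mulVec x i) ^ 2 ≤ ∑ i, (x i) ^ 2)
    (S : Submodule ℝ (Fin dx → ℝ)) (hdS : Module.finrank ℝ S = dS)
    (X : Matrix (Fin dx) (Fin n) ℝ) (hX : colSpan X = S)
    (hsv : ∀ p : Fin n, (p : ℕ) < dS → sval (F * X) p = sval X p) :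
    ∀ u ∈ S, ∑ i, (F.mulVec u i) ^ 2 = ∑ i, (u i) ^ 2 := by
  have hrank : X.rank = dS := by
    rw [rank_eq_finrank_span_cols, show Submodule.span ℝ (Set.range X.col) = S from hX, hdS]
  have hsval : sval (F * X) = sval X :=
    sval_eq_of_rank_le ((rank_mul_le_right F X).trans hrank.le) hrank.le hsv
  intro u hu
  rw [← hX, colSpan] at hu
  exact sum_sq_mulVec_eq_of_mem_span hF
    (Set.forall_mem_range.mpr (sum_sq_mulVec_transpose_apply_eq_of_sval_mul_eq hF hsval)) hu
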